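/- Let F be a connected d-regular locally sparse graph on [n]. For every vertex w of F and every v with 3 ≤ v ≤ n−3, the number of closed subgraphs of F on v vertices that contain w with deg(w) < d inside the subgraph is at most 2d. -/

import Mathlib

open SimpleGraph

/-- The edge boundary of a subgraph `H` of `G`: edges of `G` with one endpoint in `H.verts`
and the other outside. -/
def edgeBoundary {V : Type*} (G : SimpleGraph V) (H : G.Subgraph) : Set (Sym2 V) :=
  {e | ∃ u v, e = s(u, v) ∧ G.Adj u v ∧ u ∈ H.verts ∧ v ∉ H.verts}

/-- `G` is `d`-regular. -/
def IsRegularGraph {V : Type*} (G : SimpleGraph V) (d : ℕ) : Prop :=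
  ∀ v, (G.neighborSet v).ncard = d

/-- `G` on `n` vertices is locally sparse: every subgraph on between 3 and `n - 3`
vertices has edge boundary of size at least `d + 1`. -/
def LocallySparse {n : ℕ} (G : SimpleGraph (Fin n)) (d : ℕ) : Prop :=
  ∀ H : G.Subgraph, 3 ≤ H.verts.ncard → H.verts.ncard ≤ n - 3 →
    d + 1 ≤ (edgeBoundary G H).ncard

/-- `Δ = d + 1` for odd `d`, `Δ = d + 2` for even `d`. -/
def Delta (d : ℕ) : ℕ := if Odd d then d + 1 else d + 2

/-- A closed subgraph: an induced subgraph whose edge boundary has size exactly `Δ`. -/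
def IsClosedSubgraph {V : Type*} (G : SimpleGraph V) (d : ℕ) (H : G.Subgraph) : Prop :=
  H.IsInduced ∧ (edgeBoundary G H).ncard = Delta d

open Finset

/-!
Identify an induced subgraph with its vertex set `s` and let `∂s` be the number of edges
leaving `s`. A boundary vertex `w` of a closed set has a neighbour `y` outside it, so it
suffices to show that for every edge `wy` at most two closed `v`-sets contain `w` but not `y`.

Local sparsity, and for even `d` the parity `∂s ≡ d |s| (mod 2)`, give `∂s ≥ Δ` whenever
`2 ≤ |s| ≤ n - 2`. For two such closed sets `A ≠ B` the cut identities
`∂A + ∂B = ∂(A ∩ B) + ∂(A ∪ B) + 2 e(A \ B, B \ A) = ∂(A \ B) + ∂(B \ A) + 2 e(A ∩ B, (A ∪ B)ᶜ)`,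
with the edge `wy` counted in the last term, force `|A \ B| = 1`, `∂(A ∩ B) = Δ` and
`e(A ∩ B, (A ∪ B)ᶜ) = Δ - d ≤ 2`. Three such sets `A, B, C` then share their pairwise
intersection or, after complementing (which swaps `w` and `y`), their pairwise union. In the
first case the vertex `b` of `B \ A` receives `d / 2 ≥ 2` edges from `K = A ∩ B`, and `b` and `y`
both lie in `(A ∪ C)ᶜ`, so `e(K, (A ∪ C)ᶜ) ≥ 3`: a contradiction.
-/

lemma delta_le_add_two (d : ℕ) : Delta d ≤ d + 2 := by
  unfold Delta; split_ifs <;> omega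

lemma delta_le_of_lt {d m : ℕ} (h : d < m) (hm : Even d → Even m) : Delta d ≤ m := by
  unfold Delta
  split_ifs with hd
  · exact h
  · have hm := hm (Nat.not_odd_iff_even.1 hd)
    rw [Nat.even_iff] at hm
    rw [Nat.not_odd_iff_even, Nat.even_iff] at hd
    omega

lemma Finset.inter_eq_inter_or_union_eq_union {α : Type*} [DecidableEq α] {A B C : Finset α}
    (hAB : #(A \ B) = 1) (hBA : #(B \ A) = 1) (hAC : #(A \ C) = 1) (hCA : #(C \ A) = 1)
    (hBC : #(B \ C) = 1) : A ∩ B = A ∩ C ∨ A ∪ B = A ∪ C := by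
  obtain ⟨a, ha⟩ := card_eq_one.1 hAB
  obtain ⟨b, hb⟩ := card_eq_one.1 hBA
  obtain ⟨a', ha'⟩ := card_eq_one.1 hAC
  obtain ⟨c, hc⟩ := card_eq_one.1 hCA
  simp only [Finset.ext_iff, mem_sdiff, mem_singleton] at ha hb ha' hc
  by_cases haa' : a = a'
  · left; ext x; simp only [mem_inter]; grind
  by_cases hbc : b = c
  · right; ext x; simp only [mem_union]; grind
  have : {a', b} ⊆ B \ C := by intro x; simp only [mem_insert, mem_singleton, mem_sdiff]; grind
  have := card_le_card this
  rw [hBC, card_pair (by grind)] at this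
  omega

namespace SimpleGraph

variable {V : Type*} [Fintype V] [DecidableEq V] (G : SimpleGraph V) [DecidableRel G.Adj]

def cutSize (s : Finset V) : ℕ := #(G.interedges s sᶜ)

omit [Fintype V] [DecidableEq V] in
lemma card_interedges_comm (s t : Finset V) :
    #(G.interedges s t) = #(G.interedges t s) :=
  have := G.symm
  Rel.card_interedges_comm s t

omit [Fintype V] in
lemma card_interedges_union_left {s₁ s₂ : Finset V} (h : Disjoint s₁ s₂) (t : Finset V) :
    #(G.interedges (s₁ ∪ s₂) t) = #(G.interedges s₁ t) + #(G.interedges s₂ t) := by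
  rw [← card_union_of_disjoint (G.interedges_disjoint_left h t), interedges_def,
    interedges_def, interedges_def, union_product, filter_union]

omit [Fintype V] in
lemma card_interedges_union_right (s : Finset V) {t₁ t₂ : Finset V} (h : Disjoint t₁ t₂) :
    #(G.interedges s (t₁ ∪ t₂)) = #(G.interedges s t₁) + #(G.interedges s t₂) := by
  simp only [G.card_interedges_comm s, G.card_interedges_union_left h]

lemma cutSize_compl (s : Finset V) : G.cutSize sᶜ = G.cutSize s := by
  rw [cutSize, cutSize, compl_compl, card_interedges_comm]

lemma cutSize_union_add_two_mul {s t : Finset V} (h : Disjoint s t) :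
    G.cutSize (s ∪ t) + 2 * #(G.interedges s t) = G.cutSize s + G.cutSize t := by
  have hs : sᶜ = t ∪ (s ∪ t)ᶜ := by
    ext a
    have := fun ha : a ∈ s => Finset.disjoint_left.1 h ha
    simp only [mem_compl, mem_union]
    tauto
  have ht : tᶜ = s ∪ (s ∪ t)ᶜ := by
    ext a
    have := fun ha : a ∈ s => Finset.disjoint_left.1 h ha
    simp only [mem_compl, mem_union]
    tauto
  rw [cutSize, cutSize, cutSize, hs, ht, G.card_interedges_union_left h,
    G.card_interedges_union_right _ (disjoint_compl_right_iff.2 subset_union_right),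
    G.card_interedges_union_right _ (disjoint_compl_right_iff.2 subset_union_left),
    G.card_interedges_comm t s]
  ring

lemma cutSize_add_cutSize_eq_inter_union (s t : Finset V) :
    G.cutSize s + G.cutSize t =
      G.cutSize (s ∩ t) + G.cutSize (s ∪ t) + 2 * #(G.interedges (s \ t) (t \ s)) := by
  have ht := G.cutSize_union_add_two_mul (disjoint_sdiff_inter t s)
  have hu := G.cutSize_union_add_two_mul (s := s) (t := t \ s) disjoint_sdiff
  have hs := G.card_interedges_union_left (disjoint_sdiff_inter s t) (t \ s)
  rw [sdiff_union_inter, inter_comm t s] at ht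
  rw [union_sdiff_self_eq_union] at hu
  rw [sdiff_union_inter] at hs
  rw [G.card_interedges_comm (t \ s)] at ht
  omega

lemma cutSize_add_cutSize_eq_sdiff_sdiff (s t : Finset V) :
    G.cutSize s + G.cutSize t =
      G.cutSize (s \ t) + G.cutSize (t \ s) + 2 * #(G.interedges (s ∩ t) (s ∪ t)ᶜ) := by
  have := G.cutSize_add_cutSize_eq_inter_union s tᶜ
  rwa [cutSize_compl, ← sdiff_eq_inter_compl, sdiff_compl,
    show s ∪ tᶜ = (t \ s)ᶜ by ext; simp only [mem_union, mem_compl, mem_sdiff]; tauto,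
    show tᶜ \ s = (s ∪ t)ᶜ by ext; simp only [mem_union, mem_compl, mem_sdiff]; tauto,
    cutSize_compl] at this

lemma ncard_edgeBoundary {H : G.Subgraph} {s : Finset V} (hs : (s : Set V) = H.verts) :
    (edgeBoundary G H).ncard = G.cutSize s := by
  have : edgeBoundary G H = (G.interedges s sᶜ).image (fun p => s(p.1, p.2)) := by
    ext e
    simp only [edgeBoundary, ← hs, coe_image, Set.mem_image, mem_coe, mem_interedges_iff,
      mem_compl, Set.mem_ofPred_eq, Prod.exists]
    grind
  rw [this, Set.ncard_coe_finset, card_image_of_injOn, cutSize]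
  rintro ⟨a, b⟩ hab ⟨a', b'⟩ hab' h
  simp only [mem_coe, mem_interedges_iff, mem_compl] at hab hab'
  rcases Sym2.eq_iff.1 h with ⟨rfl, rfl⟩ | ⟨rfl, rfl⟩
  · rfl
  · exact absurd hab.1 hab'.2.1

structure IsClosedSeparator (d v : ℕ) (w y : V) (s : Finset V) : Prop where
  card_eq : #s = v
  cutSize_eq : G.cutSize s = Delta d
  mem : w ∈ s
  notMem : y ∉ s

variable {G} {d : ℕ}

lemma card_interedges_singleton_compl (a : V) : #(G.interedges {a} {a}ᶜ) = G.degree a := by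
  have : G.interedges {a} {a}ᶜ =
      (G.neighborFinset a).map ⟨Prod.mk a, Prod.mk_right_injective a⟩ := by
    ext ⟨x, y⟩
    simp only [mem_interedges_iff, mem_singleton, mem_compl, mem_map, mem_neighborFinset,
      Function.Embedding.coeFn_mk, Prod.mk.injEq]
    constructor
    · rintro ⟨rfl, -, h⟩; exact ⟨y, h, rfl, rfl⟩
    · rintro ⟨z, h, rfl, rfl⟩; exact ⟨rfl, h.ne', h⟩
  rw [this, card_map, card_neighborFinset_eq_degree]

lemma IsRegularOfDegree.cutSize_singleton (hreg : G.IsRegularOfDegree d) (a : V) :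
    G.cutSize {a} = d :=
  (card_interedges_singleton_compl a).trans (hreg.degree_eq a)

lemma IsRegularOfDegree.even_cutSize (hreg : G.IsRegularOfDegree d) (hd : Even d)
    (s : Finset V) : Even (G.cutSize s) := by
  induction s using Finset.induction_on with
  | empty => simp [cutSize]
  | insert a s ha ih =>
    have h := G.cutSize_union_add_two_mul (disjoint_singleton_left.2 ha)
    rw [← insert_eq, hreg.cutSize_singleton] at h
    have : Even (G.cutSize (insert a s) + 2 * #(G.interedges {a} s)) := h ▸ hd.add ih
    exact (Nat.even_add.1 this).2 (even_two_mul _)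

lemma IsRegularOfDegree.two_mul_le_cutSize_pair (hreg : G.IsRegularOfDegree d) {a b : V}
    (hab : a ≠ b) : 2 * d ≤ G.cutSize {a, b} + 2 := by
  have h := G.cutSize_union_add_two_mul (disjoint_singleton.2 hab)
  have hle := G.card_interedges_le_mul {a} {b}
  rw [← insert_eq, hreg.cutSize_singleton, hreg.cutSize_singleton] at h
  rw [card_singleton, card_singleton, mul_one] at hle
  omega

lemma IsRegularOfDegree.delta_le_cutSize_of_card_eq_two (hreg : G.IsRegularOfDegree d)
    (hd : 3 ≤ d) {s : Finset V} (hs : #s = 2) : Delta d ≤ G.cutSize s := by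
  obtain ⟨a, b, hab, rfl⟩ := card_eq_two.1 hs
  have := hreg.two_mul_le_cutSize_pair hab
  have := delta_le_of_lt (d := d) (m := 2 * d - 2) (by omega) fun _ => ⟨d - 1, by omega⟩
  omega

variable {v : ℕ} {w y : V} {s : Finset V}

lemma IsClosedSeparator.compl (h : G.IsClosedSeparator d v w y s) :
    G.IsClosedSeparator d (Fintype.card V - v) y w sᶜ where
  card_eq := by rw [card_compl, h.card_eq]
  cutSize_eq := by rw [cutSize_compl, h.cutSize_eq]
  mem := mem_compl.2 h.notMem
  notMem := notMem_compl.2 h.mem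

end SimpleGraph

lemma IsRegularGraph.isRegularOfDegree {V : Type*} [Fintype V] {G : SimpleGraph V}
    [DecidableRel G.Adj] {d : ℕ} (hreg : IsRegularGraph G d) : G.IsRegularOfDegree d := by
  intro v
  rw [← card_neighborFinset_eq_degree, ← hreg v, Set.ncard_eq_toFinset_card', neighborFinset]

lemma SimpleGraph.Subgraph.IsInduced.exists_adj_notMem_verts {V : Type*} [Finite V]
    {G : SimpleGraph V} {H : G.Subgraph} (hH : H.IsInduced) {w : V} (hw : w ∈ H.verts)
    (hlt : (H.neighborSet w).ncard < (G.neighborSet w).ncard) : ∃ y, G.Adj w y ∧ y ∉ H.verts := by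
  by_contra! h
  exact hlt.not_ge (Set.ncard_le_ncard fun y hy => hH hw (h y hy) hy)

lemma IsClosedSubgraph.isClosedSeparator_toFinset {V : Type*} [Fintype V] [DecidableEq V]
    {G : SimpleGraph V} [DecidableRel G.Adj] {d v : ℕ} {w y : V} {H : G.Subgraph}
    [Fintype H.verts] (hH : IsClosedSubgraph G d H) (hv : H.verts.ncard = v) (hw : w ∈ H.verts)
    (hy : y ∉ H.verts) : G.IsClosedSeparator d v w y H.verts.toFinset where
  card_eq := by rwa [← Set.ncard_eq_toFinset_card']
  cutSize_eq := by rw [← ncard_edgeBoundary G (Set.coe_toFinset _), hH.2]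
  mem := Set.mem_toFinset.2 hw
  notMem := fun h => hy (Set.mem_toFinset.1 h)

namespace LocallySparse

variable {n d v : ℕ} {G : SimpleGraph (Fin n)} [DecidableRel G.Adj] {w y : Fin n}
  {A B C : Finset (Fin n)}

lemma lt_cutSize (hls : LocallySparse G d) {s : Finset (Fin n)} (h3 : 3 ≤ #s)
    (hs : #s ≤ n - 3) : d < G.cutSize s := by
  have hverts : ((⊤ : G.Subgraph).induce (s : Set (Fin n))).verts.ncard = #s :=
    Set.ncard_coe_finset s
  rw [← ncard_edgeBoundary G (H := (⊤ : G.Subgraph).induce s) rfl]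
  exact hls _ (hverts ▸ h3) (hverts ▸ hs)

lemma delta_le_cutSize (hls : LocallySparse G d) (hd : 3 ≤ d) (hreg : G.IsRegularOfDegree d)
    {s : Finset (Fin n)} (h2 : 2 ≤ #s) (hs : #s ≤ n - 2) : Delta d ≤ G.cutSize s := by
  have hcompl : #sᶜ = n - #s := by rw [card_compl, Fintype.card_fin]
  obtain h | h | h : #s = 2 ∨ #sᶜ = 2 ∨ (3 ≤ #s ∧ #s ≤ n - 3) := by omega
  · exact hreg.delta_le_cutSize_of_card_eq_two hd h
  · exact G.cutSize_compl s ▸ hreg.delta_le_cutSize_of_card_eq_two hd h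
  · exact delta_le_of_lt (hls.lt_cutSize h.1 h.2) fun he => hreg.even_cutSize he s

lemma card_sdiff_eq_one (hls : LocallySparse G d) (hd : 3 ≤ d) (hreg : G.IsRegularOfDegree d)
    (hvn : v ≤ n - 3) (hwy : G.Adj w y) (hA : G.IsClosedSeparator d v w y A)
    (hB : G.IsClosedSeparator d v w y B) (hAB : A ≠ B) : #(A \ B) = 1 := by
  have hP := G.cutSize_add_cutSize_eq_sdiff_sdiff A B
  have hIO : 0 < #(G.interedges (A ∩ B) (A ∪ B)ᶜ) := card_pos.2 ⟨(w, y),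
    G.mem_interedges_iff.2 ⟨mem_inter.2 ⟨hA.mem, hB.mem⟩, by simp [hA.notMem, hB.notMem], hwy⟩⟩
  have hI : 0 < #(A ∩ B) := card_pos.2 ⟨w, mem_inter.2 ⟨hA.mem, hB.mem⟩⟩
  have hX : 0 < #(A \ B) := by
    refine card_pos.2 (sdiff_nonempty.2 fun hsub => hAB (eq_of_subset_of_card_le hsub ?_))
    rw [hA.card_eq, hB.card_eq]
  have hXY : #(A \ B) = #(B \ A) := card_sdiff_comm (hA.card_eq.trans hB.card_eq.symm)
  have := card_sdiff_add_card_inter A B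
  have := hA.card_eq
  by_contra hne
  have := hls.delta_le_cutSize hd hreg (s := A \ B) (by omega) (by omega)
  have := hls.delta_le_cutSize hd hreg (s := B \ A) (by omega) (by omega)
  rw [hA.cutSize_eq, hB.cutSize_eq] at hP
  omega

lemma card_interedges_inter_compl_union_add (hls : LocallySparse G d) (hd : 3 ≤ d)
    (hreg : G.IsRegularOfDegree d) (hvn : v ≤ n - 3) (hwy : G.Adj w y)
    (hA : G.IsClosedSeparator d v w y A) (hB : G.IsClosedSeparator d v w y B) (hAB : A ≠ B) :
    #(G.interedges (A ∩ B) (A ∪ B)ᶜ) + d = Delta d := by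
  obtain ⟨x, hx⟩ := card_eq_one.1 (hls.card_sdiff_eq_one hd hreg hvn hwy hA hB hAB)
  obtain ⟨x', hx'⟩ := card_eq_one.1 (hls.card_sdiff_eq_one hd hreg hvn hwy hB hA hAB.symm)
  have := G.cutSize_add_cutSize_eq_sdiff_sdiff A B
  rw [hx, hx', hreg.cutSize_singleton, hreg.cutSize_singleton, hA.cutSize_eq,
    hB.cutSize_eq] at this
  omega

lemma cutSize_inter (hls : LocallySparse G d) (hd : 3 ≤ d) (hreg : G.IsRegularOfDegree d)
    (hv3 : 3 ≤ v) (hvn : v ≤ n - 3) (hwy : G.Adj w y) (hA : G.IsClosedSeparator d v w y A)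
    (hB : G.IsClosedSeparator d v w y B) (hAB : A ≠ B) : G.cutSize (A ∩ B) = Delta d := by
  have hX := hls.card_sdiff_eq_one hd hreg hvn hwy hA hB hAB
  have := card_sdiff_add_card_inter A B
  have := card_union_add_card_inter A B
  have := hA.card_eq
  have := hB.card_eq
  have hI := hls.delta_le_cutSize hd hreg (s := A ∩ B) (by omega) (by omega)
  have hU := hls.delta_le_cutSize hd hreg (s := A ∪ B) (by omega) (by omega)
  have := G.cutSize_add_cutSize_eq_inter_union A B
  rw [hA.cutSize_eq, hB.cutSize_eq] at this
  omega

lemma false_of_inter_eq_inter (hls : LocallySparse G d) (hd : 3 ≤ d)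
    (hreg : G.IsRegularOfDegree d) (hv3 : 3 ≤ v) (hvn : v ≤ n - 3) (hwy : G.Adj w y)
    (hA : G.IsClosedSeparator d v w y A) (hB : G.IsClosedSeparator d v w y B)
    (hC : G.IsClosedSeparator d v w y C) (hAB : A ≠ B) (hAC : A ≠ C) (hBC : B ≠ C)
    (hK : A ∩ B = A ∩ C) : False := by
  set K := A ∩ B
  set O := (A ∪ C)ᶜ
  obtain ⟨b, hb⟩ := card_eq_one.1 (hls.card_sdiff_eq_one hd hreg hvn hwy hB hA hAB.symm)
  have hbB : b ∈ B := (mem_sdiff.1 (hb ▸ mem_singleton_self b)).1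
  have hbA : b ∉ A := (mem_sdiff.1 (hb ▸ mem_singleton_self b)).2
  have hBK : B = {b} ∪ K := by rw [← hb, show K = B ∩ A from inter_comm _ _, sdiff_union_inter]
  have hbK : b ∉ K := fun h => hbA (mem_inter.1 h).1
  have hbC : b ∉ C := by
    intro hbC
    refine hBC (eq_of_subset_of_card_le ?_ (hC.card_eq.trans hB.card_eq.symm).le)
    rw [hBK, hK]
    exact union_subset (singleton_subset_iff.2 hbC) inter_subset_right
  have hKb : 2 * #(G.interedges K {b}) = d := by
    have := G.cutSize_union_add_two_mul (disjoint_singleton_left.2 hbK)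
    rw [← hBK, hB.cutSize_eq, hreg.cutSize_singleton,
      hls.cutSize_inter hd hreg hv3 hvn hwy hA hB hAB, G.card_interedges_comm] at this
    omega
  have hKO : #(G.interedges K O) + d = Delta d := by
    rw [hK]; exact hls.card_interedges_inter_compl_union_add hd hreg hvn hwy hA hC hAC
  have hyb : y ≠ b := fun h => hB.notMem (h ▸ hbB)
  have hKy : 0 < #(G.interedges K {y}) := card_pos.2
    ⟨(w, y), G.mem_interedges_iff.2 ⟨mem_inter.2 ⟨hA.mem, hB.mem⟩, mem_singleton_self y, hwy⟩⟩
  have hsub : #(G.interedges K ({b} ∪ {y})) ≤ #(G.interedges K O) := by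
    refine card_le_card (G.interedges_mono subset_rfl ?_)
    simp only [O, union_subset_iff, singleton_subset_iff, mem_compl, mem_union]
    exact ⟨not_or.2 ⟨hbA, hbC⟩, not_or.2 ⟨hA.notMem, hC.notMem⟩⟩
  rw [G.card_interedges_union_right K (disjoint_singleton.2 hyb.symm)] at hsub
  have := delta_le_add_two d
  omega

lemma ncard_setOf_isClosedSeparator_le_two (hls : LocallySparse G d) (hd : 3 ≤ d)
    (hreg : G.IsRegularOfDegree d) (hv3 : 3 ≤ v) (hvn : v ≤ n - 3) (hwy : G.Adj w y) :
    {s | G.IsClosedSeparator d v w y s}.ncard ≤ 2 := by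
  by_contra! h
  obtain ⟨A, B, C, hA, hB, hC, hAB, hAC, hBC⟩ := (Set.two_lt_ncard_iff (Set.toFinite _)).1 h
  have h1 {A B : Finset (Fin n)} (hA : G.IsClosedSeparator d v w y A)
      (hB : G.IsClosedSeparator d v w y B) (hAB : A ≠ B) :=
    hls.card_sdiff_eq_one hd hreg hvn hwy hA hB hAB
  rcases inter_eq_inter_or_union_eq_union (h1 hA hB hAB) (h1 hB hA hAB.symm) (h1 hA hC hAC)
    (h1 hC hA hAC.symm) (h1 hB hC hBC) with hK | hU
  · exact hls.false_of_inter_eq_inter hd hreg hv3 hvn hwy hA hB hC hAB hAC hBC hK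
  · have hcard : Fintype.card (Fin n) = n := Fintype.card_fin n
    refine hls.false_of_inter_eq_inter hd hreg (by omega) (by omega) hwy.symm hA.compl hB.compl
      hC.compl (compl_injective.ne hAB) (compl_injective.ne hAC) (compl_injective.ne hBC) ?_
    rw [← compl_union, ← compl_union, hU]

end LocallySparse

theorem at_most_2d_closed_subgraphs_at_boundary_vertex_general {n d : ℕ} (hd : 3 ≤ d)
    (G : SimpleGraph (Fin n))
    (hreg : IsRegularGraph G d) (hls : LocallySparse G d)
    (w : Fin n) (v : ℕ) (h3 : 3 ≤ v) (hv : v ≤ n - 3) :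
    {H : G.Subgraph | IsClosedSubgraph G d H ∧ H.verts.ncard = v ∧
      w ∈ H.verts ∧ (H.neighborSet w).ncard < d}.ncard ≤ 2 * d := by
  classical
  have hreg' := hreg.isRegularOfDegree
  calc _ ≤ (⋃ y ∈ G.neighborFinset w, {s | G.IsClosedSeparator d v w y s}).ncard := by
        refine Set.ncard_le_ncard_of_injOn (fun H => H.verts.toFinset) ?_ ?_ (Set.toFinite _)
        · rintro H ⟨hH, hcard, hw, hdeg⟩
          obtain ⟨y, hwy, hy⟩ := hH.1.exists_adj_notMem_verts hw (hreg w ▸ hdeg)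
          exact Set.mem_biUnion (by simpa using hwy) (hH.isClosedSeparator_toFinset hcard hw hy)
        · rintro H₁ ⟨⟨hind₁, -⟩, -⟩ H₂ ⟨⟨hind₂, -⟩, -⟩ h
          rw [← hind₁.induce_top_verts, ← hind₂.induce_top_verts, Set.toFinset_inj.1 h]
    _ ≤ ∑ y ∈ G.neighborFinset w, {s | G.IsClosedSeparator d v w y s}.ncard :=
        Finset.set_ncard_biUnion_le _ _
    _ ≤ ∑ y ∈ G.neighborFinset w, 2 := sum_le_sum fun y hy =>
        hls.ncard_setOf_isClosedSeparator_le_two hd hreg' h3 hv ((mem_neighborFinset _ _ _).1 hy)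
    _ = 2 * d := by
        rw [sum_const, card_neighborFinset_eq_degree, hreg'.degree_eq, smul_eq_mul, mul_comm]

/-- In a connected locally sparse `d`-regular graph, for every vertex `w` and every
`3 ≤ v ≤ n - 3`, there are at most `2d` closed subgraphs on `v` vertices containing `w`
as a boundary vertex (i.e. with degree less than `d` inside the subgraph). -/
theorem at_most_2d_closed_subgraphs_at_boundary_vertex {n d : ℕ} (hd : 3 ≤ d)
    (G : SimpleGraph (Fin n)) (hconn : G.Connected)
    (hreg : IsRegularGraph G d) (hls : LocallySparse G d)
    (w : Fin n) (v : ℕ) (h3 : 3 ≤ v) (hv : v ≤ n - 3) :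
    {H : G.Subgraph | IsClosedSubgraph G d H ∧ H.verts.ncard = v ∧
      w ∈ H.verts ∧ (H.neighborSet w).ncard < d}.ncard ≤ 2 * d :=
  at_most_2d_closed_subgraphs_at_boundary_vertex_general hd G hreg hls w v h3 hv
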